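/- arXiv:1912.10745 — 2 statements merged into one kernel-verified Lean document; each statement's English description precedes it below -/
import Mathlib

section
/- Let R be a graded commutative ring and {f_i}_{1≤i≤n}, {h_i}_{1≤i≤n} two sequences of homogeneous elements with deg f_1 < ⋯ < deg f_n and deg h_i = deg f_i for each i. If for every i the difference f_i − h_i lies in the ideal generated by f_1,…,f_{i−1}, then the ideals ⟨h_1,…,h_n⟩ and ⟨f_1,…,f_n⟩ are equal. -/
/-!
Each `f i` is `h i` plus an element of the span of the earlier `f j`, so by well-founded
induction every `f i` lies in `⟨h⟩`; conversely `h i = f i - (f i - h i)` lies in `⟨f⟩` directly.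
-/

namespace Submodule

variable {R M ι : Type*} [Ring R] [AddCommGroup M] [Module R M]

theorem span_range_le_of_sub_mem_span_range {f g : ι → M}
    (hsub : ∀ i, f i - g i ∈ span R (Set.range f)) :
    span R (Set.range g) ≤ span R (Set.range f) := by
  rw [span_le, Set.range_subset_iff]
  intro i
  rw [← sub_sub_self (f i) (g i)]
  exact sub_mem (subset_span (Set.mem_range_self i)) (hsub i)

variable [LT ι] [WellFoundedLT ι]

theorem mem_span_range_of_sub_mem_span_image_lt {f g : ι → M}
    (hsub : ∀ i, f i - g i ∈ span R (f '' {j | j < i})) (i : ι) :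
    f i ∈ span R (Set.range g) := by
  induction i using WellFoundedLT.induction with
  | _ i ih =>
    have hlower : span R (f '' {j | j < i}) ≤ span R (Set.range g) := by
      rw [span_le, Set.image_subset_iff]
      exact ih
    rw [← sub_add_cancel (f i) (g i)]
    exact add_mem (hlower (hsub i)) (subset_span (Set.mem_range_self i))

theorem span_range_eq_of_sub_mem_span_image_lt {f g : ι → M}
    (hsub : ∀ i, f i - g i ∈ span R (f '' {j | j < i})) :
    span R (Set.range g) = span R (Set.range f) :=
  le_antisymm
    (span_range_le_of_sub_mem_span_range fun i ↦
      span_mono (Set.image_subset_range f _) (hsub i))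
    (span_le.mpr <| Set.range_subset_iff.mpr <| mem_span_range_of_sub_mem_span_image_lt hsub)

end Submodule

theorem ideal_eq_of_successive_congruences_general
    {R : Type*} [CommRing R]
    (n : ℕ) (f h : Fin n → R)
    (hcong : ∀ i : Fin n, f i - h i ∈ Ideal.span (f '' {j | j < i})) :
    Ideal.span (Set.range h) = Ideal.span (Set.range f) :=
  Submodule.span_range_eq_of_sub_mem_span_image_lt hcong

/-- Let `R` be a graded commutative ring and `{f_i}`, `{h_i}` (`1 ≤ i ≤ n`)
two sequences of homogeneous elements with `deg f_1 < ⋯ < deg f_n` and `deg h_i = deg f_i`.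
If for every `i` the difference `f_i − h_i` lies in the ideal generated by `f_1, …, f_{i−1}`,
then `⟨h_1, …, h_n⟩ = ⟨f_1, …, f_n⟩`. -/
theorem ideal_eq_of_successive_congruences
    {R : Type*} [CommRing R] (𝒜 : ℕ → Submodule ℤ R) [GradedRing 𝒜]
    (n : ℕ) (f h : Fin n → R) (d : Fin n → ℕ) (hd : StrictMono d)
    (hf : ∀ i, f i ∈ 𝒜 (d i)) (hh : ∀ i, h i ∈ 𝒜 (d i))
    (hcong : ∀ i : Fin n, f i - h i ∈ Ideal.span (f '' {j | j < i})) :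
    Ideal.span (Set.range h) = Ideal.span (Set.range f) :=
  ideal_eq_of_successive_congruences_general n f h hcong
end

section
/- For the ring H = Z[x_1,…,x_m]/J where J is generated by x_j^2 − Σ_{i<j} a_{i,j} x_i x_j for 1 ≤ j ≤ m (with a_{i,j} integers), the degree-2m component of H (grading deg x_i = 2) is a free abelian group of rank 1 generated by the class of x_1⋯x_m. -/
/-!
Existence: modulo `J`, `x_j^2 ≡ Σ_{i<j} a_{i,j} x_i x_j`. Rewriting a square in a monomial this
way keeps the degree and strictly lowers the weight `Σ_k k d_k`, and the only monomial of degree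
`m` without squares is `x_1 ⋯ x_m`.

Uniqueness: it suffices to find an additive map killing `J` and sending `x_1 ⋯ x_m` to `1`. Write
`p = p(x_j = 0) + x_j q` and let `D_j p = q(x_j := ℓ_j)`, with `ℓ_j = Σ_{i<j} a_{i,j} x_i`; this is
the `x_j`-coefficient of `p` in `A[x_j]/(x_j (x_j - ℓ_j))`. `D_j` is linear over polynomials free of
`x_j` and kills every multiple of the `j`-th generator `x_j (x_j - ℓ_j)`, which involves only
`x_i` for `i ≤ j`. Hence `D_1 ∘ ⋯ ∘ D_m` kills `J`, and it maps `x_1 ⋯ x_m` to `1`.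
-/

open MvPolynomial

/-- The ideal `J = ⟨x_j^2 − Σ_{i<j} a_{i,j} x_i x_j : 1 ≤ j ≤ m⟩` of the Bott–Samelson
cohomology ring `H^*(Γ(β_1, …, β_m)) = ℤ[x_1, …, x_m]/J` (Lemma 3.1). -/
noncomputable def BSideal (m : ℕ) (a : Fin m → Fin m → ℤ) :
    Ideal (MvPolynomial (Fin m) ℤ) :=
  Ideal.span (Set.range fun j : Fin m =>
    X j ^ 2 - ∑ i ∈ Finset.univ.filter (fun i : Fin m => i < j), C (a i j) * X i * X j)

namespace MvPolynomial

variable {σ R : Type*} [CommRing R] {j : σ}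

theorem notMem_vars_of_mem_supported {p : MvPolynomial σ R} {s : Set σ}
    (hp : p ∈ supported R s) (hj : j ∉ s) : j ∉ p.vars :=
  fun h => hj (mem_supported.mp hp h)

variable [DecidableEq σ]

theorem divMonomial_single_mul_of_notMem_vars {q : MvPolynomial σ R} (hq : j ∉ q.vars)
    (p : MvPolynomial σ R) :
    (q * p).divMonomial (Finsupp.single j 1) = q * p.divMonomial (Finsupp.single j 1) := by
  symm
  apply eq_divMonomial_single (r := q * p.modMonomial (Finsupp.single j 1))
  · conv_lhs => rw [← p.divMonomial_add_modMonomial_single j]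
    ring
  · intro n hn
    obtain ⟨u, hu, v, hv, rfl⟩ := Finset.mem_add.mp (support_mul _ _ hn)
    have hv0 : v j = 0 := by
      by_contra h
      exact mem_support_iff.mp hv
        (coeff_modMonomial_of_le _ (Finsupp.single_le_iff.mpr (Nat.one_le_iff_ne_zero.mpr h)))
    simp [mem_support_notMem_vars_zero hu hq, hv0]

theorem bind₁_update_X_of_notMem_vars {q : MvPolynomial σ R} (hq : j ∉ q.vars)
    (c : MvPolynomial σ R) : bind₁ (Function.update X j c) q = q := by
  calc bind₁ (Function.update X j c) q = bind₁ X q :=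
        hom_congr_vars (f₁ := (bind₁ (Function.update X j c)).toRingHom)
          (f₂ := (bind₁ X).toRingHom) (by ext; simp) (fun i hi _ => ?_) rfl
    _ = q := by rw [bind₁_X_left, AlgHom.id_apply]
  have hij : i ≠ j := by rintro rfl; exact hq hi
  simp [Function.update_of_ne hij]

/-- Writing `p = p(x_j = 0) + x_j q`, this is `q(x_j := c)`. -/
noncomputable def divSubst (j : σ) (c : MvPolynomial σ R) :
    MvPolynomial σ R →+ MvPolynomial σ R :=
  (bind₁ (Function.update X j c)).toAddMonoidHom.comp
    (AddMonoidHom.mk' (·.divMonomial (Finsupp.single j 1)) fun p q => add_divMonomial p q _)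

variable {c : MvPolynomial σ R}

theorem divSubst_mul_of_notMem_vars {q : MvPolynomial σ R} (hq : j ∉ q.vars)
    (p : MvPolynomial σ R) : divSubst j c (q * p) = q * divSubst j c p := by
  simp [divSubst, divMonomial_single_mul_of_notMem_vars hq, bind₁_update_X_of_notMem_vars hq]

theorem divSubst_X_mul (p : MvPolynomial σ R) :
    divSubst j c (X j * p) = bind₁ (Function.update X j c) p := by
  simp [divSubst]

theorem divSubst_mul_X_mul_X_sub (hc : j ∉ c.vars) (p : MvPolynomial σ R) :
    divSubst j c (p * (X j * (X j - c))) = 0 := by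
  rw [mul_left_comm, divSubst_X_mul]
  simp [bind₁_update_X_of_notMem_vars hc]

end MvPolynomial

namespace BSideal

variable {m : ℕ} (a : Fin m → Fin m → ℤ)

noncomputable def linearForm (j : Fin m) : MvPolynomial (Fin m) ℤ :=
  ∑ i ∈ Finset.univ.filter (· < j), C (a i j) * X i

theorem generator_eq (j : Fin m) :
    X j ^ 2 - ∑ i ∈ Finset.univ.filter (fun i : Fin m => i < j), C (a i j) * X i * X j =
      X j * (X j - linearForm a j) := by
  rw [linearForm, mul_sub, Finset.mul_sum, sq]
  congr 1
  exact Finset.sum_congr rfl fun i _ => by ring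

theorem linearForm_mem_supported (j : Fin m) :
    linearForm a j ∈ supported ℤ (Set.Iio j) :=
  Subalgebra.sum_mem _ fun _ hi =>
    Subalgebra.mul_mem _ (Subalgebra.algebraMap_mem _ _)
      (X_mem_supported.mpr (Finset.mem_filter.mp hi).2)

theorem notMem_vars_linearForm (j : Fin m) : j ∉ (linearForm a j).vars :=
  notMem_vars_of_mem_supported (linearForm_mem_supported a j) (lt_irrefl j)

theorem notMem_vars_generator {j k : Fin m} (hjk : j < k) :
    k ∉ (X j * (X j - linearForm a j)).vars := by
  have hmem : X j * (X j - linearForm a j) ∈ supported ℤ (Set.Iic j) :=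
    Subalgebra.mul_mem _ (X_mem_supported.mpr Set.self_mem_Iic)
      (Subalgebra.sub_mem _ (X_mem_supported.mpr Set.self_mem_Iic)
        (supported_mono Set.Iio_subset_Iic_self (linearForm_mem_supported a j)))
  exact notMem_vars_of_mem_supported hmem (not_le.mpr hjk)

/-- `D_0 ∘ ⋯ ∘ D_{min k m - 1}` with `D_j = divSubst j (linearForm a j)` (variables indexed
from `0`). -/
noncomputable def divSubstIter : ℕ → MvPolynomial (Fin m) ℤ →+ MvPolynomial (Fin m) ℤ
  | 0 => AddMonoidHom.id _
  | k + 1 =>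
    if hk : k < m then (divSubstIter k).comp (divSubst ⟨k, hk⟩ (linearForm a ⟨k, hk⟩))
    else divSubstIter k

theorem divSubstIter_succ {k : ℕ} (hk : k < m) (p : MvPolynomial (Fin m) ℤ) :
    divSubstIter a (k + 1) p =
      divSubstIter a k (divSubst ⟨k, hk⟩ (linearForm a ⟨k, hk⟩) p) := by
  rw [divSubstIter, dif_pos hk, AddMonoidHom.comp_apply]

theorem divSubstIter_mul_generator (j : Fin m) {k : ℕ} (hjk : (j : ℕ) < k) (hkm : k ≤ m)
    (p : MvPolynomial (Fin m) ℤ) :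
    divSubstIter a k (p * (X j * (X j - linearForm a j))) = 0 := by
  induction k, hjk using Nat.le_induction generalizing p with
  | base =>
    rw [divSubstIter_succ a j.isLt, divSubst_mul_X_mul_X_sub (notMem_vars_linearForm a j),
      map_zero]
  | succ k hjk ih =>
    have hk : k < m := hkm
    rw [divSubstIter_succ a hk, mul_comm,
      divSubst_mul_of_notMem_vars (notMem_vars_generator a hjk), mul_comm]
    exact ih hk.le _

theorem divSubstIter_eq_zero_of_mem {x : MvPolynomial (Fin m) ℤ} (hx : x ∈ BSideal m a) :
    divSubstIter a m x = 0 := by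
  obtain ⟨c, rfl⟩ := Ideal.mem_span_range_iff_exists_fun.mp hx
  simp only [generator_eq, map_sum]
  exact Finset.sum_eq_zero fun j _ => divSubstIter_mul_generator a j j.isLt le_rfl (c j)

theorem divSubstIter_prod_X {k : ℕ} (hkm : k ≤ m) :
    divSubstIter a k (∏ i ∈ Finset.univ.filter (fun i : Fin m => (i : ℕ) < k), X i) = 1 := by
  induction k with
  | zero => simp [divSubstIter]
  | succ k ih =>
    have hk : k < m := hkm
    have hsplit : Finset.univ.filter (fun i : Fin m => (i : ℕ) < k + 1) =
        insert ⟨k, hk⟩ (Finset.univ.filter fun i : Fin m => (i : ℕ) < k) := by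
      ext i
      simp only [Finset.mem_filter, Finset.mem_univ, true_and, Finset.mem_insert, Fin.ext_iff]
      omega
    have hmem : ∏ i ∈ Finset.univ.filter (fun i : Fin m => (i : ℕ) < k), X i ∈
        supported ℤ (Set.Iio (⟨k, hk⟩ : Fin m)) :=
      Subalgebra.prod_mem _ fun _ hi => X_mem_supported.mpr (Finset.mem_filter.mp hi).2
    rw [hsplit, Finset.prod_insert (by simp), divSubstIter_succ a hk, divSubst_X_mul,
      bind₁_update_X_of_notMem_vars (notMem_vars_of_mem_supported hmem Set.self_notMem_Iio),
      ih hk.le]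

theorem zsmul_mk_prod_X_injective :
    Function.Injective fun n : ℤ => n • Ideal.Quotient.mk (BSideal m a) (∏ i, X i) := by
  intro n n' h
  have hmem : (n - n') • ∏ i, X i ∈ BSideal m a := by
    rw [← Ideal.Quotient.eq_zero_iff_mem, map_zsmul, sub_smul]
    exact sub_eq_zero.mpr h
  have hzero := divSubstIter_eq_zero_of_mem a hmem
  have hone : divSubstIter a m (∏ i, X i) = 1 := by simpa using divSubstIter_prod_X a le_rfl
  rwa [map_zsmul, hone, zsmul_eq_mul, mul_one, Int.cast_eq_zero, sub_eq_zero] at hzero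

theorem mk_monomial_add_single_two (e : Fin m →₀ ℕ) (j : Fin m) :
    Ideal.Quotient.mk (BSideal m a) (monomial (e + Finsupp.single j 2) 1) =
      ∑ i ∈ Finset.univ.filter (· < j), a i j • Ideal.Quotient.mk (BSideal m a)
        (monomial (e + Finsupp.single i 1 + Finsupp.single j 1) 1) := by
  have hrel : Ideal.Quotient.mk (BSideal m a) (X j ^ 2) =
      Ideal.Quotient.mk (BSideal m a)
        (∑ i ∈ Finset.univ.filter (· < j), C (a i j) * X i * X j) :=
    Ideal.Quotient.eq.mpr (Ideal.subset_span ⟨j, rfl⟩)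
  rw [show monomial (e + Finsupp.single j 2) (1 : ℤ) = monomial e 1 * X j ^ 2 by
    rw [X_pow_eq_monomial, monomial_mul, mul_one], map_mul, hrel, ← map_mul, Finset.mul_sum,
    map_sum]
  refine Finset.sum_congr rfl fun i _ => ?_
  have hmono : monomial e 1 * (C (a i j) * X i * X j) =
      C (a i j) * monomial (e + Finsupp.single i 1 + Finsupp.single j 1) 1 := by
    simp only [X, C_mul_monomial, monomial_mul, add_assoc, mul_one, one_mul]
  rw [hmono]
  simp [zsmul_eq_mul]

theorem monomial_eq_prod_X {d : Fin m →₀ ℕ} (hd : d.degree = m) (hlt : ∀ j, d j < 2) :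
    monomial d (1 : ℤ) = ∏ i, X i := by
  have hone : ∀ i, d i = 1 := fun i =>
    (Finset.sum_eq_sum_iff_of_le fun i _ => Nat.lt_succ_iff.mp (hlt i)).mp
      (by simp [← Finsupp.degree_eq_sum, hd]) i (Finset.mem_univ i)
  rw [monomial_eq, C_1, one_mul, Finsupp.prod_fintype _ _ (fun _ => pow_zero _)]
  simp [hone]

theorem mk_monomial_mem_zmultiples {d : Fin m →₀ ℕ} (hd : d.degree = m) :
    Ideal.Quotient.mk (BSideal m a) (monomial d 1) ∈
      AddSubgroup.zmultiples (Ideal.Quotient.mk (BSideal m a) (∏ i, X i)) := by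
  induction hw : Finsupp.weight (fun i : Fin m => (i : ℕ)) d using Nat.strong_induction_on
    generalizing d with
  | _ n ih =>
    by_cases hsq : ∃ j, 2 ≤ d j
    · obtain ⟨j, hj⟩ := hsq
      obtain ⟨e, rfl⟩ := exists_add_of_le (Finsupp.single_le_iff.mpr hj)
      rw [add_comm, mk_monomial_add_single_two]
      refine AddSubgroup.sum_mem _ fun i hi => AddSubgroup.zsmul_mem _ (ih _ ?_ ?_ rfl) _
      · have hij : (i : ℕ) < j := (Finset.mem_filter.mp hi).2
        rw [← hw]
        simp only [map_add, Finsupp.weight_single, smul_eq_mul, one_mul]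
        omega
      · simp only [map_add, Finsupp.degree_single] at hd ⊢
        omega
    · push Not at hsq
      rw [monomial_eq_prod_X hd hsq]
      exact AddSubgroup.mem_zmultiples _

theorem mk_mem_zmultiples_of_isHomogeneous {p : MvPolynomial (Fin m) ℤ}
    (hp : p.IsHomogeneous m) :
    Ideal.Quotient.mk (BSideal m a) p ∈
      AddSubgroup.zmultiples (Ideal.Quotient.mk (BSideal m a) (∏ i, X i)) := by
  rw [p.as_sum, map_sum]
  refine AddSubgroup.sum_mem _ fun d hd => ?_
  have hdeg : d.degree = m := by
    by_contra h
    exact mem_support_iff.mp hd (hp.coeff_eq_zero h)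
  rw [← mul_one (coeff d p), ← C_mul_monomial]
  simpa [zsmul_eq_mul] using
    AddSubgroup.zsmul_mem _ (mk_monomial_mem_zmultiples a hdeg) (coeff d p)

end BSideal

/-- For `H = ℤ[x_1, …, x_m]/J` as above, the degree-`2m` component of `H`
(with grading `deg x_i = 2`, i.e. the image of the polynomials homogeneous of polynomial
degree `m`) is a free abelian group of rank `1` generated by the class of `x_1 ⋯ x_m`:
every class of a homogeneous degree-`m` polynomial is a *unique* integer multiple of the
class of `x_1 ⋯ x_m`. -/
theorem BS_top_component_free_rank_one (m : ℕ) (a : Fin m → Fin m → ℤ)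
    (h : MvPolynomial (Fin m) ℤ) (hh : h.IsHomogeneous m) :
    ∃! n : ℤ,
      Ideal.Quotient.mk (BSideal m a) h =
        n • Ideal.Quotient.mk (BSideal m a) (∏ i : Fin m, X i) := by
  obtain ⟨n, hn⟩ :=
    AddSubgroup.mem_zmultiples_iff.mp (BSideal.mk_mem_zmultiples_of_isHomogeneous a hh)
  exact ⟨n, hn.symm, fun n' hn' => BSideal.zsmul_mk_prod_X_injective a (hn'.symm.trans hn.symm)⟩
end
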